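/- Let X = W ⊕_a Z be the absolute sum of real Banach spaces W and Z with respect to an absolute norm N which is of type 1 or of type ∞ (so W is an absolute summand of X of type 1 or ∞). If W ⊕_a Z has the weak BPBp for numerical radius (weak BPBp-nu), then W has the weak BPBp-nu. -/

import Mathlib

open Filter Topology

/-- `N` is an absolute norm on `ℝ²`: a norm with `N(1,0)=N(0,1)=1` and
`N(s,t)=N(|s|,|t|)`. -/
structure IsAbsoluteNorm (N : ℝ → ℝ → ℝ) : Prop where
  nonneg : ∀ s t : ℝ, 0 ≤ N s t
  eq_zero_iff : ∀ s t : ℝ, N s t = 0 ↔ s = 0 ∧ t = 0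
  triangle : ∀ s₁ t₁ s₂ t₂ : ℝ, N (s₁ + s₂) (t₁ + t₂) ≤ N s₁ t₁ + N s₂ t₂
  smul : ∀ c s t : ℝ, N (c * s) (c * t) = |c| * N s t
  one_zero : N 1 0 = 1
  zero_one : N 0 1 = 1
  abs_eq : ∀ s t : ℝ, N s t = N |s| |t|

/-- An absolute norm is of type 1 if `|x| + K|y| ≤ N(x,y)` for some `K > 0`. -/
def AbsNormTypeOne (N : ℝ → ℝ → ℝ) : Prop :=
  ∃ K : ℝ, 0 < K ∧ ∀ x y : ℝ, |x| + K * |y| ≤ N x y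

/-- An absolute norm is of type ∞ if `N(1,b₀) = 1` for some `b₀ > 0`. -/
def AbsNormTypeInfty (N : ℝ → ℝ → ℝ) : Prop :=
  ∃ b₀ : ℝ, 0 < b₀ ∧ N 1 b₀ = 1

/-- The numerical radius of a bounded linear operator on `X`:
`v(T) = sup {|x*(T x)| : ‖x‖ = ‖x*‖ = 1, x*(x) = 1}`. -/
noncomputable def NumRadius {X : Type*} [NormedAddCommGroup X] [NormedSpace ℝ X]
    (T : X →L[ℝ] X) : ℝ :=
  sSup {r : ℝ | ∃ (x : X) (f : X →L[ℝ] ℝ),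
    ‖x‖ = 1 ∧ ‖f‖ = 1 ∧ f x = 1 ∧ r = |f (T x)|}

/-- `X` has the weak Bishop–Phelps–Bollobás property for numerical radius. -/
def HasWeakBPBnu (X : Type*) [NormedAddCommGroup X] [NormedSpace ℝ X] : Prop :=
  ∀ ε : ℝ, 0 < ε → ∃ η : ℝ, 0 < η ∧
    ∀ (T : X →L[ℝ] X) (x : X) (f : X →L[ℝ] ℝ),
      NumRadius T = 1 → ‖x‖ = 1 → ‖f‖ = 1 → f x = 1 → 1 - η < |f (T x)| →
      ∃ (S : X →L[ℝ] X) (x₀ : X) (f₀ : X →L[ℝ] ℝ),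
        ‖x₀‖ = 1 ∧ ‖f₀‖ = 1 ∧ f₀ x₀ = 1 ∧
        |f₀ (S x₀)| = NumRadius S ∧ ‖f₀ - f‖ < ε ∧ ‖x₀ - x‖ < ε ∧ ‖S - T‖ < ε

/-!
The operator `T ⊕ 0` on `X` has the same numerical radius as `T`, and `(x ⊕ 0, f ∘ π_W)` is a state
of `X`; the weak BPBp-nu of `X` yields `S` attaining its numerical radius at a nearby state
`(y₀, g₀)`, `y₀ = w₀ ⊕ z₀`. Since `z₀` and `g₀|_Z` are small, type 1 forces `z₀ = 0` and type ∞
forces `g₀|_Z = 0` (`RigidNearAxis`). Either way the maps `J u = u ⊕ g₀(u ⊕ 0) z₀` and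
`P (w ⊕ z) = w + g₀(0 ⊕ z) w₀` are contractions with `P J = id`, `J w₀ = y₀` and
`g₀|_W ∘ P = g₀`, so `P S J` attains its numerical radius at `(w₀, g₀|_W)`, and it is close to
`P (T ⊕ 0) J = T`.
-/

section NumericalRadius

variable {E F : Type*} [NormedAddCommGroup E] [NormedSpace ℝ E]
  [NormedAddCommGroup F] [NormedSpace ℝ F]

/-- `(x, f) ∈ Π(E)`. -/
def IsState (x : E) (f : E →L[ℝ] ℝ) : Prop :=
  ‖x‖ = 1 ∧ ‖f‖ = 1 ∧ f x = 1

lemma IsState.of_norm_le_one {x : E} {f : E →L[ℝ] ℝ} (hx : ‖x‖ ≤ 1) (hf : ‖f‖ ≤ 1)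
    (hfx : f x = 1) : IsState x f := by
  have h : 1 ≤ ‖f‖ * ‖x‖ := by simpa [hfx] using f.le_opNorm x
  refine ⟨?_, ?_, hfx⟩ <;> nlinarith [norm_nonneg x, norm_nonneg f]

lemma ContinuousLinearMap.opNorm_le_of_apply_le (φ : E →L[ℝ] ℝ) {c : ℝ}
    (h : ∀ u, ‖u‖ ≤ 1 → φ u ≤ c) : ‖φ‖ ≤ c := by
  have hc : 0 ≤ c := by simpa using h 0 (by simp)
  refine φ.opNorm_le_of_unit_norm hc fun u hu => ?_
  have := h (-u) (by simp [hu])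
  rw [Real.norm_eq_abs, abs_le]
  constructor <;> linarith [h u hu.le, φ.map_neg u]

lemma abs_apply_le_numRadius (T : E →L[ℝ] E) {x : E} {f : E →L[ℝ] ℝ} (hxf : IsState x f) :
    |f (T x)| ≤ NumRadius T := by
  refine le_csSup ⟨‖T‖, ?_⟩ ⟨x, f, hxf.1, hxf.2.1, hxf.2.2, rfl⟩
  rintro _ ⟨y, g, hy, hg, -, rfl⟩
  simpa [hy, hg, ← Real.norm_eq_abs] using (g.le_opNorm _).trans
    (mul_le_mul_of_nonneg_left (T.le_opNorm y) (norm_nonneg g))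

lemma numRadius_nonneg (T : E →L[ℝ] E) : 0 ≤ NumRadius T :=
  Real.sSup_nonneg <| by rintro _ ⟨-, -, -, -, -, rfl⟩; exact abs_nonneg _

lemma numRadius_le {T : E →L[ℝ] E} {c : ℝ} (hc : 0 ≤ c)
    (h : ∀ x f, IsState x f → |f (T x)| ≤ c) : NumRadius T ≤ c :=
  Real.sSup_le (by rintro _ ⟨x, f, hx, hf, hfx, rfl⟩; exact h x f ⟨hx, hf, hfx⟩) hc

lemma abs_apply_le_mul_numRadius (T : E →L[ℝ] E) {u : E} {φ : E →L[ℝ] ℝ}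
    (hφu : φ u = ‖φ‖ * ‖u‖) : |φ (T u)| ≤ ‖φ‖ * ‖u‖ * NumRadius T := by
  rcases eq_or_ne u 0 with rfl | hu
  · simp
  rcases eq_or_ne φ 0 with rfl | hφ
  · simp
  have hu' := norm_pos_iff.2 hu
  have hφ' := norm_pos_iff.2 hφ
  have hstate : IsState (‖u‖⁻¹ • u) (‖φ‖⁻¹ • φ) := by
    refine ⟨by simp [norm_smul, hu'.ne'], by simp [norm_smul, hφ'.ne'], ?_⟩
    simp only [smul_apply, map_smul, smul_eq_mul, hφu]
    field_simp
  have key : φ (T u) = ‖φ‖ * ‖u‖ * (‖φ‖⁻¹ • φ) (T (‖u‖⁻¹ • u)) := by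
    simp only [smul_apply, map_smul, smul_eq_mul]
    field_simp
  rw [key, abs_mul, abs_of_nonneg (by positivity)]
  exact mul_le_mul_of_nonneg_left (abs_apply_le_numRadius T hstate) (by positivity)

/-- Compressions `P ∘ S ∘ J` along a contractive retraction do not increase the numerical
radius, because `(J x, f ∘ P)` is a state whenever `(x, f)` is. -/
lemma numRadius_comp_comp_le (P : F →L[ℝ] E) (J : E →L[ℝ] F) (hPJ : ∀ x, P (J x) = x)
    (hP : ‖P‖ ≤ 1) (hJ : ‖J‖ ≤ 1) (S : F →L[ℝ] F) :
    NumRadius (P ∘L S ∘L J) ≤ NumRadius S := by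
  refine numRadius_le (numRadius_nonneg S) fun x f ⟨hx, hf, hfx⟩ => ?_
  have hstate : IsState (J x) (f ∘L P) := by
    refine .of_norm_le_one ?_ ?_ (by simp [hPJ, hfx])
    · exact (J.le_opNorm x).trans (by rw [hx, mul_one]; exact hJ)
    · exact (f.opNorm_comp_le P).trans (by rw [hf, one_mul]; exact hP)
  exact abs_apply_le_numRadius S hstate

end NumericalRadius

namespace IsAbsoluteNorm

variable {N : ℝ → ℝ → ℝ}

lemma swap (hN : IsAbsoluteNorm N) : IsAbsoluteNorm (fun s t => N t s) where
  nonneg s t := hN.nonneg t s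
  eq_zero_iff s t := (hN.eq_zero_iff t s).trans and_comm
  triangle s₁ t₁ s₂ t₂ := hN.triangle t₁ s₁ t₂ s₂
  smul c s t := hN.smul c t s
  one_zero := hN.zero_one
  zero_one := hN.one_zero
  abs_eq s t := hN.abs_eq t s

lemma apply_zero_right (hN : IsAbsoluteNorm N) (s : ℝ) : N s 0 = |s| := by
  simpa [hN.one_zero] using hN.smul s 1 0

lemma apply_zero_left (hN : IsAbsoluteNorm N) (t : ℝ) : N 0 t = |t| :=
  hN.swap.apply_zero_right t

lemma apply_neg_right (hN : IsAbsoluteNorm N) (s t : ℝ) : N s (-t) = N s t := by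
  rw [hN.abs_eq, abs_neg, ← hN.abs_eq]

lemma apply_abs_right (hN : IsAbsoluteNorm N) (s t : ℝ) : N s |t| = N s t := by
  rw [hN.abs_eq, abs_abs, ← hN.abs_eq]

lemma abs_le_left (hN : IsAbsoluteNorm N) (s t : ℝ) : |s| ≤ N s t := by
  have h := hN.triangle s t s (-t)
  rw [hN.apply_neg_right, add_neg_cancel, ← two_mul, hN.apply_zero_right, abs_mul,
    abs_two] at h
  linarith

lemma abs_le_right (hN : IsAbsoluteNorm N) (s t : ℝ) : |t| ≤ N s t :=
  hN.swap.abs_le_left t s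

/-- `t₁` is a convex combination of `±|t₂|`, and `N s` is convex and even. -/
lemma mono_right (hN : IsAbsoluteNorm N) (s : ℝ) {t₁ t₂ : ℝ} (ht : |t₁| ≤ |t₂|) :
    N s t₁ ≤ N s t₂ := by
  rcases (abs_nonneg t₂).eq_or_lt with h0 | h0
  · rw [abs_nonpos_iff.1 (ht.trans h0.ge), abs_eq_zero.1 h0.symm]
  set l := (|t₂| + t₁) / (2 * |t₂|)
  have hl0 : 0 ≤ l := div_nonneg (by linarith [neg_abs_le t₁]) (by positivity)
  have hl1 : 0 ≤ 1 - l := by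
    rw [sub_nonneg, div_le_one (by positivity)]; linarith [le_abs_self t₁]
  have ht₁ : t₁ = l * |t₂| + (1 - l) * -|t₂| := by
    simp only [l]; field_simp; ring
  calc N s t₁ = N (l * s + (1 - l) * s) (l * |t₂| + (1 - l) * -|t₂|) := by rw [← ht₁]; ring_nf
    _ ≤ N (l * s) (l * |t₂|) + N ((1 - l) * s) ((1 - l) * -|t₂|) := hN.triangle _ _ _ _
    _ = N s t₂ := by
      rw [hN.smul, hN.smul, hN.apply_neg_right, hN.apply_abs_right, abs_of_nonneg hl0,
        abs_of_nonneg hl1]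
      ring

lemma mono (hN : IsAbsoluteNorm N) {s₁ s₂ t₁ t₂ : ℝ} (hs : |s₁| ≤ |s₂|) (ht : |t₁| ≤ |t₂|) :
    N s₁ t₁ ≤ N s₂ t₂ :=
  (hN.mono_right s₁ ht).trans (hN.swap.mono_right t₂ hs)

end IsAbsoluteNorm

section RigidNearAxis

variable {N : ℝ → ℝ → ℝ}

/-- `(c, d)` lies in the dual unit ball of `N` (tested on the positive quadrant). -/
def DualNormLeOne (N : ℝ → ℝ → ℝ) (c d : ℝ) : Prop :=
  ∀ s t, 0 ≤ s → 0 ≤ t → c * s + d * t ≤ N s t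

/-- What types 1 and ∞ have in common: norming pairs `((a, b), (c, d))` of `N` close to
`((1, 0), (1, 0))` have `b = 0` or `d = 0`, and can be moved to `((1, b), (1, d))` without leaving
the unit balls of `N` and its dual. -/
def RigidNearAxis (N : ℝ → ℝ → ℝ) (κ : ℝ) : Prop :=
  ∀ a b c d : ℝ, 0 ≤ a → 0 ≤ b → 0 ≤ c → 0 ≤ d → N a b = 1 → c * a + d * b = 1 →
    DualNormLeOne N c d → b < κ → d < κ → d * b = 0 ∧ N 1 b = 1 ∧ DualNormLeOne N 1 d

lemma AbsNormTypeOne.exists_rigidNearAxis (hN : IsAbsoluteNorm N) (h : AbsNormTypeOne N) :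
    ∃ κ, 0 < κ ∧ RigidNearAxis N κ := by
  obtain ⟨K, hK, hKN⟩ := h
  refine ⟨K, hK, fun a b c d ha hb _ _ hab hcd hdual hbK hdK => ?_⟩
  have hc : c ≤ 1 := by simpa [hN.one_zero] using hdual 1 0 zero_le_one le_rfl
  have haKb : a + K * b ≤ 1 := by simpa [abs_of_nonneg ha, abs_of_nonneg hb, hab] using hKN a b
  have hb0 : b = 0 := by nlinarith
  refine ⟨by simp [hb0], by simp [hb0, hN.one_zero], fun s t hs ht => ?_⟩
  have := hKN s t
  rw [abs_of_nonneg hs, abs_of_nonneg ht] at this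
  nlinarith

lemma AbsNormTypeInfty.exists_rigidNearAxis (hN : IsAbsoluteNorm N)
    (h : AbsNormTypeInfty N) : ∃ κ, 0 < κ ∧ RigidNearAxis N κ := by
  obtain ⟨b₀, hb₀, hNb₀⟩ := h
  refine ⟨b₀, hb₀, fun a b c d _ hb hc hd hab hcd hdual hbb₀ _ => ?_⟩
  have ha : a ≤ 1 := by simpa [hab] using (le_abs_self a).trans (hN.abs_le_left a b)
  have hcdb₀ : c + d * b₀ ≤ 1 := by simpa [hNb₀] using hdual 1 b₀ zero_le_one hb₀.le
  have hd0 : d = 0 := by nlinarith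
  refine ⟨by simp [hd0], le_antisymm ?_ (by simpa using hN.abs_le_left 1 b), ?_⟩
  · refine (hN.mono_right 1 ?_).trans hNb₀.le
    rw [abs_of_nonneg hb, abs_of_pos hb₀]
    exact hbb₀.le
  · intro s t hs _
    simpa [hd0, abs_of_nonneg hs] using hN.abs_le_left s t

end RigidNearAxis

namespace AbsoluteSum

open ContinuousLinearMap

variable {W Z X : Type*} [NormedAddCommGroup W] [NormedSpace ℝ W]
  [NormedAddCommGroup Z] [NormedSpace ℝ Z] [NormedAddCommGroup X] [NormedSpace ℝ X]
  {N : ℝ → ℝ → ℝ} (e : X ≃L[ℝ] W × Z)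

def IsAbsoluteSum (N : ℝ → ℝ → ℝ) (e : X ≃L[ℝ] W × Z) : Prop :=
  ∀ x : X, ‖x‖ = N ‖(e x).1‖ ‖(e x).2‖

def inl : W →L[ℝ] X := (e.symm : W × Z →L[ℝ] X) ∘L ContinuousLinearMap.inl ℝ W Z

def inr : Z →L[ℝ] X := (e.symm : W × Z →L[ℝ] X) ∘L ContinuousLinearMap.inr ℝ W Z

def fst : X →L[ℝ] W := ContinuousLinearMap.fst ℝ W Z ∘L (e : X →L[ℝ] W × Z)

def snd : X →L[ℝ] Z := ContinuousLinearMap.snd ℝ W Z ∘L (e : X →L[ℝ] W × Z)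

@[simp] lemma fst_inl (u : W) : fst e (inl e u) = u := by simp [fst, inl]

@[simp] lemma snd_inl (u : W) : snd e (inl e u) = 0 := by simp [snd, inl]

@[simp] lemma fst_inr (v : Z) : fst e (inr e v) = 0 := by simp [fst, inr]

@[simp] lemma snd_inr (v : Z) : snd e (inr e v) = v := by simp [snd, inr]

lemma inl_fst_add_inr_snd (x : X) : inl e (fst e x) + inr e (snd e x) = x := by
  simp [inl, inr, fst, snd, ← map_add]

/-- The operator `T ⊕ 0` on `X`. -/
def liftOp (T : W →L[ℝ] W) : X →L[ℝ] X := inl e ∘L T ∘L fst e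

variable {e}

lemma norm_inl_add_inr (he : IsAbsoluteSum N e) (u : W) (v : Z) :
    ‖inl e u + inr e v‖ = N ‖u‖ ‖v‖ := by
  simp [he _, inl, inr, ← map_add]

lemma norm_inl (hN : IsAbsoluteNorm N) (he : IsAbsoluteSum N e) (u : W) :
    ‖inl e u‖ = ‖u‖ := by
  have h := norm_inl_add_inr he u (0 : Z)
  rwa [map_zero, add_zero, norm_zero, hN.apply_zero_right, abs_norm] at h

lemma norm_inr (hN : IsAbsoluteNorm N) (he : IsAbsoluteSum N e) (v : Z) :
    ‖inr e v‖ = ‖v‖ := by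
  have h := norm_inl_add_inr he (0 : W) v
  rwa [map_zero, zero_add, norm_zero, hN.apply_zero_left, abs_norm] at h

lemma norm_fst_le (hN : IsAbsoluteNorm N) (he : IsAbsoluteSum N e) (x : X) :
    ‖fst e x‖ ≤ ‖x‖ := by
  simpa [he x, fst] using hN.abs_le_left ‖(e x).1‖ ‖(e x).2‖

lemma norm_snd_le (hN : IsAbsoluteNorm N) (he : IsAbsoluteSum N e) (x : X) :
    ‖snd e x‖ ≤ ‖x‖ := by
  simpa [he x, snd] using hN.abs_le_right ‖(e x).1‖ ‖(e x).2‖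

lemma opNorm_inl_le (hN : IsAbsoluteNorm N) (he : IsAbsoluteSum N e) :
    ‖inl e‖ ≤ 1 :=
  opNorm_le_bound _ zero_le_one fun u => by rw [norm_inl hN he, one_mul]

lemma opNorm_fst_le (hN : IsAbsoluteNorm N) (he : IsAbsoluteSum N e) :
    ‖fst e‖ ≤ 1 :=
  opNorm_le_bound _ zero_le_one fun x => by rw [one_mul]; exact norm_fst_le hN he x

lemma dualNormLeOne_comp (hN : IsAbsoluteNorm N) (he : IsAbsoluteSum N e)
    {g : X →L[ℝ] ℝ} (hg : ‖g‖ ≤ 1) : DualNormLeOne N ‖g ∘L inl e‖ ‖g ∘L inr e‖ := by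
  intro s t hs ht
  have key : ∀ u v, ‖u‖ ≤ 1 → ‖v‖ ≤ 1 → s * g (inl e u) + t * g (inr e v) ≤ N s t := by
    intro u v hu hv
    calc s * g (inl e u) + t * g (inr e v) = g (inl e (s • u) + inr e (t • v)) := by
          simp only [map_add, map_smul, smul_eq_mul]
      _ ≤ ‖g‖ * ‖inl e (s • u) + inr e (t • v)‖ := (le_abs_self _).trans (g.le_opNorm _)
      _ ≤ N (s * ‖u‖) (t * ‖v‖) := by
          rw [norm_inl_add_inr he, norm_smul, norm_smul, Real.norm_of_nonneg hs,
            Real.norm_of_nonneg ht]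
          exact mul_le_of_le_one_left (hN.nonneg _ _) hg
      _ ≤ N s t := hN.mono
          (by rw [abs_of_nonneg hs, abs_of_nonneg (by positivity)]; nlinarith [norm_nonneg u])
          (by rw [abs_of_nonneg ht, abs_of_nonneg (by positivity)]; nlinarith [norm_nonneg v])
  have hinl : ∀ v, ‖v‖ ≤ 1 → s * ‖g ∘L inl e‖ + t * g (inr e v) ≤ N s t := by
    intro v hv
    have := (s • (g ∘L inl e)).opNorm_le_of_apply_le (c := N s t - t * g (inr e v))
      fun u hu => by simp only [smul_apply, comp_apply, smul_eq_mul]; linarith [key u v hu hv]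
    rw [norm_smul, Real.norm_of_nonneg hs] at this
    linarith
  have := (t • (g ∘L inr e)).opNorm_le_of_apply_le (c := N s t - s * ‖g ∘L inl e‖)
    fun v hv => by simp only [smul_apply, comp_apply, smul_eq_mul]; linarith [hinl v hv]
  rw [norm_smul, Real.norm_of_nonneg ht] at this
  linarith

lemma _root_.IsState.apply_inl_fst_eq (hN : IsAbsoluteNorm N)
    (he : IsAbsoluteSum N e) {y : X} {g : X →L[ℝ] ℝ} (hyg : IsState y g) :
    g (inl e (fst e y)) = ‖g ∘L inl e‖ * ‖fst e y‖ ∧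
      g (inr e (snd e y)) = ‖g ∘L inr e‖ * ‖snd e y‖ ∧
      ‖g ∘L inl e‖ * ‖fst e y‖ + ‖g ∘L inr e‖ * ‖snd e y‖ = 1 := by
  obtain ⟨hy, hg, hgy⟩ := hyg
  have hsum : g (inl e (fst e y)) + g (inr e (snd e y)) = 1 := by
    rw [← map_add, inl_fst_add_inr_snd, hgy]
  have h₁ : g (inl e (fst e y)) ≤ ‖g ∘L inl e‖ * ‖fst e y‖ :=
    (le_abs_self _).trans ((g ∘L inl e).le_opNorm _)
  have h₂ : g (inr e (snd e y)) ≤ ‖g ∘L inr e‖ * ‖snd e y‖ :=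
    (le_abs_self _).trans ((g ∘L inr e).le_opNorm _)
  have h₃ : ‖g ∘L inl e‖ * ‖fst e y‖ + ‖g ∘L inr e‖ * ‖snd e y‖ ≤ 1 :=
    (dualNormLeOne_comp hN he hg.le _ _ (norm_nonneg _) (norm_nonneg _)).trans_eq
      ((he y).symm.trans hy)
  exact ⟨by linarith, by linarith, by linarith⟩

lemma numRadius_liftOp (hN : IsAbsoluteNorm N) (he : IsAbsoluteSum N e)
    (T : W →L[ℝ] W) : NumRadius (liftOp e T) = NumRadius T := by
  refine le_antisymm (numRadius_le (numRadius_nonneg T) fun y g hyg => ?_) ?_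
  · obtain ⟨h₁, -, h₃⟩ := hyg.apply_inl_fst_eq hN he
    have hle : ‖g ∘L inl e‖ * ‖fst e y‖ ≤ 1 := by
      nlinarith [mul_nonneg (norm_nonneg (g ∘L inr e)) (norm_nonneg (snd e y))]
    calc |g (liftOp e T y)| ≤ ‖g ∘L inl e‖ * ‖fst e y‖ * NumRadius T :=
          abs_apply_le_mul_numRadius (u := fst e y) (φ := g ∘L inl e) T h₁
      _ ≤ NumRadius T := mul_le_of_le_one_left (numRadius_nonneg T) hle
  · have hT : fst e ∘L liftOp e T ∘L inl e = T := by ext u; simp [liftOp]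
    simpa [hT] using numRadius_comp_comp_le (fst e) (inl e) (by simp) (opNorm_fst_le hN he)
      (opNorm_inl_le hN he) (liftOp e T)

lemma isState_inl_comp_fst (hN : IsAbsoluteNorm N)
    (he : IsAbsoluteSum N e) {x : W} {f : W →L[ℝ] ℝ} (hxf : IsState x f) :
    IsState (inl e x) (f ∘L fst e) := by
  refine .of_norm_le_one (by rw [norm_inl hN he, hxf.1]) ?_ (by simp [hxf.2.2])
  exact (f.opNorm_comp_le (fst e)).trans (by rw [hxf.2.1, one_mul]; exact opNorm_fst_le hN he)

lemma norm_fst_sub_le (hN : IsAbsoluteNorm N) (he : IsAbsoluteSum N e)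
    (y : X) (x : W) : ‖fst e y - x‖ ≤ ‖y - inl e x‖ := by
  simpa using norm_fst_le hN he (y - inl e x)

lemma norm_snd_le_norm_sub_inl (hN : IsAbsoluteNorm N)
    (he : IsAbsoluteSum N e) (y : X) (x : W) :
    ‖snd e y‖ ≤ ‖y - inl e x‖ := by
  simpa using norm_snd_le hN he (y - inl e x)

lemma norm_comp_inl_sub_le (hN : IsAbsoluteNorm N)
    (he : IsAbsoluteSum N e) (g : X →L[ℝ] ℝ) (f : W →L[ℝ] ℝ) :
    ‖g ∘L inl e - f‖ ≤ ‖g - f ∘L fst e‖ := by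
  have h : g ∘L inl e - f = (g - f ∘L fst e) ∘L inl e := by ext u; simp
  rw [h]
  exact (opNorm_comp_le _ _).trans (mul_le_of_le_one_right (norm_nonneg _) (opNorm_inl_le hN he))

lemma norm_comp_inr_le (hN : IsAbsoluteNorm N) (he : IsAbsoluteSum N e)
    (g : X →L[ℝ] ℝ) (f : W →L[ℝ] ℝ) : ‖g ∘L inr e‖ ≤ ‖g - f ∘L fst e‖ := by
  have h : g ∘L inr e = (g - f ∘L fst e) ∘L inr e := by ext v; simp
  rw [h]
  refine (opNorm_comp_le _ _).trans (mul_le_of_le_one_right (norm_nonneg _) ?_)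
  exact opNorm_le_bound _ zero_le_one fun v => by rw [norm_inr hN he, one_mul]

variable (e)

def embAt (y₀ : X) (g₀ : X →L[ℝ] ℝ) : W →L[ℝ] X :=
  inl e + (g₀ ∘L inl e).smulRight (inr e (snd e y₀))

def projAt (y₀ : X) (g₀ : X →L[ℝ] ℝ) : X →L[ℝ] W :=
  fst e + (g₀ ∘L inr e ∘L snd e).smulRight (fst e y₀)

variable {e} {y₀ : X} {g₀ : X →L[ℝ] ℝ}

lemma embAt_apply (u : W) : embAt e y₀ g₀ u = inl e u + g₀ (inl e u) • inr e (snd e y₀) := rfl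

lemma projAt_apply (y : X) : projAt e y₀ g₀ y = fst e y + g₀ (inr e (snd e y)) • fst e y₀ := rfl

@[simp] lemma fst_embAt (u : W) : fst e (embAt e y₀ g₀ u) = u := by simp [embAt_apply]

@[simp] lemma projAt_inl (u : W) : projAt e y₀ g₀ (inl e u) = u := by simp [projAt_apply]

lemma projAt_embAt (hz : g₀ (inr e (snd e y₀)) = 0) (u : W) :
    projAt e y₀ g₀ (embAt e y₀ g₀ u) = u := by
  simp [projAt_apply, embAt_apply, hz]

lemma embAt_fst (hw : g₀ (inl e (fst e y₀)) = 1) : embAt e y₀ g₀ (fst e y₀) = y₀ := by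
  rw [embAt_apply, hw, one_smul, inl_fst_add_inr_snd]

lemma comp_projAt (hw : g₀ (inl e (fst e y₀)) = 1) : (g₀ ∘L inl e) ∘L projAt e y₀ g₀ = g₀ := by
  ext y
  simp only [comp_apply, projAt_apply, map_add, map_smul, hw, smul_eq_mul, mul_one]
  rw [← map_add, inl_fst_add_inr_snd]

lemma projAt_comp_liftOp_comp_embAt (T : W →L[ℝ] W) :
    projAt e y₀ g₀ ∘L liftOp e T ∘L embAt e y₀ g₀ = T := by
  ext u
  simp [liftOp]

lemma opNorm_embAt_le (hN : IsAbsoluteNorm N) (he : IsAbsoluteSum N e)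
    (hg₀ : ‖g₀‖ ≤ 1) (hb : N 1 ‖snd e y₀‖ = 1) : ‖embAt e y₀ g₀‖ ≤ 1 := by
  refine opNorm_le_bound _ zero_le_one fun u => ?_
  have hgu : |g₀ (inl e u)| ≤ ‖u‖ :=
    ((g₀ ∘L inl e).le_opNorm u).trans (mul_le_of_le_one_left (norm_nonneg u)
      ((opNorm_comp_le _ _).trans (by nlinarith [opNorm_inl_le hN he, norm_nonneg g₀])))
  calc ‖embAt e y₀ g₀ u‖ = N ‖u‖ (|g₀ (inl e u)| * ‖snd e y₀‖) := by
        rw [embAt_apply, ← map_smul, norm_inl_add_inr he, norm_smul, Real.norm_eq_abs]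
    _ ≤ N (‖u‖ * 1) (‖u‖ * ‖snd e y₀‖) := hN.mono (by simp)
        (by simpa only [abs_mul, abs_abs, abs_norm] using
          mul_le_mul_of_nonneg_right hgu (norm_nonneg _))
    _ = 1 * ‖u‖ := by rw [hN.smul, hb, abs_norm, mul_one, one_mul]

lemma opNorm_projAt_le (hN : IsAbsoluteNorm N) (he : IsAbsoluteSum N e)
    (hy₀ : ‖y₀‖ ≤ 1) (hd : DualNormLeOne N 1 ‖g₀ ∘L inr e‖) : ‖projAt e y₀ g₀‖ ≤ 1 := by
  refine opNorm_le_bound _ zero_le_one fun y => ?_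
  have hw₀ : ‖fst e y₀‖ ≤ 1 := (norm_fst_le hN he y₀).trans hy₀
  calc ‖projAt e y₀ g₀ y‖ ≤ ‖fst e y‖ + |g₀ (inr e (snd e y))| * ‖fst e y₀‖ := by
        rw [projAt_apply, ← Real.norm_eq_abs, ← norm_smul]; exact norm_add_le _ _
    _ ≤ ‖fst e y‖ + ‖g₀ ∘L inr e‖ * ‖snd e y‖ := add_le_add le_rfl
        ((mul_le_of_le_one_right (abs_nonneg _) hw₀).trans ((g₀ ∘L inr e).le_opNorm _))
    _ ≤ 1 * ‖y‖ := by
        have := hd _ _ (norm_nonneg (fst e y)) (norm_nonneg (snd e y))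
        rw [one_mul] at this ⊢
        exact this.trans_eq (he y).symm

lemma _root_.RigidNearAxis.split_state (hN : IsAbsoluteNorm N) (he : IsAbsoluteSum N e) {κ : ℝ}
    (hrig : RigidNearAxis N κ) (hst : IsState y₀ g₀) (hb : ‖snd e y₀‖ < κ)
    (hd : ‖g₀ ∘L inr e‖ < κ) :
    g₀ (inr e (snd e y₀)) = 0 ∧ g₀ (inl e (fst e y₀)) = 1 ∧ N 1 ‖snd e y₀‖ = 1 ∧
      DualNormLeOne N 1 ‖g₀ ∘L inr e‖ := by
  obtain ⟨hw, hz, hsum⟩ := hst.apply_inl_fst_eq hN he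
  obtain ⟨hdb, hN1b, hdual⟩ := hrig _ _ _ _ (norm_nonneg _) (norm_nonneg _) (norm_nonneg _)
    (norm_nonneg _) ((he y₀).symm.trans hst.1) hsum (dualNormLeOne_comp hN he hst.2.1.le) hb hd
  have hdb' : ‖g₀ ∘L inr e‖ * ‖snd e y₀‖ = 0 := hdb
  exact ⟨hz.trans hdb', by linarith, hN1b, hdual⟩

theorem exists_compression (hN : IsAbsoluteNorm N) (he : IsAbsoluteSum N e)
    {κ : ℝ} (hrig : RigidNearAxis N κ) (hst : IsState y₀ g₀) (hb : ‖snd e y₀‖ < κ)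
    (hd : ‖g₀ ∘L inr e‖ < κ) {S : X →L[ℝ] X} (hS : |g₀ (S y₀)| = NumRadius S) :
    ∃ S₁ : W →L[ℝ] W, IsState (fst e y₀) (g₀ ∘L inl e) ∧
      |(g₀ ∘L inl e) (S₁ (fst e y₀))| = NumRadius S₁ ∧
      ∀ T : W →L[ℝ] W, ‖S₁ - T‖ ≤ ‖S - liftOp e T‖ := by
  obtain ⟨hz, hw, hN1b, hdual⟩ := hrig.split_state hN he hst hb hd
  let P := projAt e y₀ g₀
  let J := embAt e y₀ g₀
  have hP : ‖P‖ ≤ 1 := opNorm_projAt_le hN he hst.1.le hdual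
  have hJ : ‖J‖ ≤ 1 := opNorm_embAt_le hN he hst.2.1.le hN1b
  have hstate : IsState (fst e y₀) (g₀ ∘L inl e) :=
    .of_norm_le_one ((norm_fst_le hN he y₀).trans hst.1.le)
      ((opNorm_comp_le _ _).trans (by nlinarith [opNorm_inl_le hN he, norm_nonneg g₀, hst.2.1]))
      hw
  refine ⟨P ∘L S ∘L J, hstate, le_antisymm (abs_apply_le_numRadius _ hstate) ?_, fun T => ?_⟩
  · have hJw : J (fst e y₀) = y₀ := embAt_fst hw
    have hPg : (g₀ ∘L inl e) ∘L P = g₀ := comp_projAt hw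
    have hval : (g₀ ∘L inl e) ((P ∘L S ∘L J) (fst e y₀)) = g₀ (S y₀) := by
      change ((g₀ ∘L inl e) ∘L P) (S (J (fst e y₀))) = _
      rw [hJw, hPg]
    rw [hval, hS]
    exact numRadius_comp_comp_le P J (projAt_embAt hz) hP hJ S
  · have hPT : P ∘L liftOp e T ∘L J = T := projAt_comp_liftOp_comp_embAt T
    calc ‖P ∘L S ∘L J - T‖ = ‖P ∘L (S - liftOp e T) ∘L J‖ := by
          rw [sub_comp, comp_sub, hPT]
      _ ≤ ‖P‖ * (‖S - liftOp e T‖ * ‖J‖) :=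
          (opNorm_comp_le _ _).trans (mul_le_mul_of_nonneg_left (opNorm_comp_le _ _) (norm_nonneg _))
      _ ≤ ‖S - liftOp e T‖ :=
          (mul_le_of_le_one_left (by positivity) hP).trans (mul_le_of_le_one_right (norm_nonneg _) hJ)

end AbsoluteSum

theorem weak_bpbnu_absolute_summand_general (W Z X : Type*)
    [NormedAddCommGroup W] [NormedSpace ℝ W]
    [NormedAddCommGroup Z] [NormedSpace ℝ Z]
    [NormedAddCommGroup X] [NormedSpace ℝ X]
    (N : ℝ → ℝ → ℝ) (hN : IsAbsoluteNorm N)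
    (e : X ≃L[ℝ] W × Z) (he : ∀ x : X, ‖x‖ = N ‖(e x).1‖ ‖(e x).2‖)
    (htype : AbsNormTypeOne N ∨ AbsNormTypeInfty N)
    (h : HasWeakBPBnu X) : HasWeakBPBnu W := by
  open AbsoluteSum in
  obtain ⟨κ, hκ, hrig⟩ := htype.elim (·.exists_rigidNearAxis hN) (·.exists_rigidNearAxis hN)
  intro ε hε
  have ltε {r : ℝ} (hr : r < min ε κ) : r < ε := hr.trans_le (min_le_left ε κ)
  have ltκ {r : ℝ} (hr : r < min ε κ) : r < κ := hr.trans_le (min_le_right ε κ)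
  obtain ⟨η, hη, hX⟩ := h (min ε κ) (lt_min hε hκ)
  refine ⟨η, hη, fun T x f hT hx hf hfx hTx => ?_⟩
  obtain ⟨hx', hf', hfx'⟩ := isState_inl_comp_fst (e := e) hN he ⟨hx, hf, hfx⟩
  obtain ⟨S, y₀, g₀, hy₀, hg₀, hg₀y₀, hS, hgf, hyx, hST⟩ := hX (liftOp e T) _ _
    (by rw [numRadius_liftOp hN he, hT]) hx' hf' hfx' (by simpa [liftOp] using hTx)
  obtain ⟨S₁, hst, hattain, hS₁⟩ := exists_compression hN he hrig ⟨hy₀, hg₀, hg₀y₀⟩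
    ((norm_snd_le_norm_sub_inl hN he y₀ x).trans_lt (ltκ hyx))
    ((norm_comp_inr_le hN he g₀ f).trans_lt (ltκ hgf)) hS
  exact ⟨S₁, _, _, hst.1, hst.2.1, hst.2.2, hattain,
    (norm_comp_inl_sub_le hN he g₀ f).trans_lt (ltε hgf),
    (norm_fst_sub_le hN he y₀ x).trans_lt (ltε hyx), (hS₁ T).trans_lt (ltε hST)⟩

theorem weak_bpbnu_absolute_summand (W Z X : Type*)
    [NormedAddCommGroup W] [NormedSpace ℝ W] [CompleteSpace W]
    [NormedAddCommGroup Z] [NormedSpace ℝ Z] [CompleteSpace Z]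
    [NormedAddCommGroup X] [NormedSpace ℝ X] [CompleteSpace X]
    (N : ℝ → ℝ → ℝ) (hN : IsAbsoluteNorm N)
    (e : X ≃L[ℝ] W × Z) (he : ∀ x : X, ‖x‖ = N ‖(e x).1‖ ‖(e x).2‖)
    (htype : AbsNormTypeOne N ∨ AbsNormTypeInfty N)
    (h : HasWeakBPBnu X) : HasWeakBPBnu W :=
  weak_bpbnu_absolute_summand_general W Z X N hN e he htype h
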